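/- arXiv:1308.1653 — 2 statements merged into one kernel-verified Lean document; each statement's English description precedes it below -/
import Mathlib

section
/- If G is a graph of order n, then G contains a book of size at least q(G) - n, where q(G) is the largest eigenvalue of the signless Laplacian of G. -/
open Matrix SimpleGraph Finset BigOperators

variable {V : Type*}

noncomputable def signlessLap (G : SimpleGraph V) [Fintype V] [DecidableEq V]
    [DecidableRel G.Adj] : Matrix V V ℝ :=
  Matrix.diagonal (fun v => (G.degree v : ℝ)) + G.adjMatrix ℝ

theorem signlessLap_isHermitian (G : SimpleGraph V) [Fintype V] [DecidableEq V]
    [DecidableRel G.Adj] : (signlessLap G).IsHermitian := by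
  unfold signlessLap
  apply Matrix.IsHermitian.add
  · exact Matrix.isHermitian_diagonal _
  · ext i j
    simp [Matrix.conjTranspose_apply, SimpleGraph.adjMatrix_apply, adj_comm]

noncomputable def qIndex (G : SimpleGraph V) [Fintype V] [DecidableEq V]
    [DecidableRel G.Adj] : ℝ :=
  ⨆ i, (signlessLap_isHermitian G).eigenvalues i

/-!
For a top eigenvector `x` of the signless Laplacian `Q`, the vector `y = |x|` satisfies
`q • y ≤ Q *ᵥ y` entrywise, since `Q` is entrywise nonnegative. As `(Q *ᵥ y) a = ∑_{b ~ a} (y a + y b)`,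
at an edge `uv` maximizing `y u + y v` this gives `q (y u + y v) ≤ (d u + d v) (y u + y v)`, hence
`q ≤ d u + d v = |N u ∩ N v| + |N u ∪ N v| ≤ |N u ∩ N v| + n`.
-/

theorem Matrix.abs_mulVec_le_mulVec_abs {m n R : Type*} [Fintype n] [Ring R] [LinearOrder R]
    [IsStrictOrderedRing R] {A : Matrix m n R} (hA : ∀ i j, 0 ≤ A i j) (x : n → R) (i : m) :
    |(A *ᵥ x) i| ≤ (A *ᵥ fun j => |x j|) i :=
  calc |∑ j, A i j * x j| ≤ ∑ j, |A i j * x j| := abs_sum_le_sum_abs _ _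
    _ = ∑ j, A i j * |x j| := by simp only [abs_mul, abs_of_nonneg (hA i _)]

section SignlessLaplacian

variable [Fintype V] [DecidableEq V] (G : SimpleGraph V) [DecidableRel G.Adj]

theorem signlessLap_apply_nonneg (u v : V) : 0 ≤ signlessLap G u v := by
  simp only [signlessLap, Matrix.add_apply, Matrix.diagonal_apply, SimpleGraph.adjMatrix_apply]
  positivity

theorem signlessLap_mulVec_apply (z : V → ℝ) (u : V) :
    (signlessLap G *ᵥ z) u = ∑ w ∈ G.neighborFinset u, (z u + z w) := by
  rw [signlessLap, Matrix.add_mulVec, Pi.add_apply, Matrix.mulVec_diagonal,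
    adjMatrix_mulVec_apply, sum_add_distrib, sum_const, card_neighborFinset_eq_degree,
    nsmul_eq_mul]

theorem exists_mulVec_signlessLap_eq_qIndex_smul [Nonempty V] :
    ∃ x : V → ℝ, x ≠ 0 ∧ signlessLap G *ᵥ x = qIndex G • x := by
  set hQ := signlessLap_isHermitian G
  obtain ⟨i, hi⟩ := Finite.exists_max hQ.eigenvalues
  have hq : qIndex G = hQ.eigenvalues i :=
    le_antisymm (ciSup_le hi) (le_ciSup (Set.finite_range _).bddAbove i)
  refine ⟨hQ.eigenvectorBasis i, fun h => hQ.eigenvectorBasis.orthonormal.ne_zero i ?_, ?_⟩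
  · exact WithLp.ofLp_injective 2 h
  · rw [hq]
    exact hQ.mulVec_eigenvectorBasis i

theorem exists_nonneg_qIndex_smul_le_mulVec [Nonempty V] (hq : 0 ≤ qIndex G) :
    ∃ y : V → ℝ, 0 ≤ y ∧ y ≠ 0 ∧ ∀ u, qIndex G * y u ≤ (signlessLap G *ᵥ y) u := by
  obtain ⟨x, hx, hQx⟩ := exists_mulVec_signlessLap_eq_qIndex_smul G
  refine ⟨fun v => |x v|, fun v => abs_nonneg _, fun h => hx ?_, fun u => ?_⟩
  · ext v
    simpa using congrFun h v
  calc qIndex G * |x u| = |(signlessLap G *ᵥ x) u| := by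
        rw [hQx, Pi.smul_apply, smul_eq_mul, abs_mul, abs_of_nonneg hq]
    _ ≤ _ := abs_mulVec_le_mulVec_abs (signlessLap_apply_nonneg G) x u

theorem exists_adj_le_degree_add_degree {q : ℝ} (hq : 0 < q) {y : V → ℝ} (hy0 : 0 ≤ y)
    (hy : y ≠ 0) (hqy : ∀ u, q * y u ≤ (signlessLap G *ᵥ y) u) :
    ∃ u v, G.Adj u v ∧ q ≤ G.degree u + G.degree v := by
  obtain ⟨a, ha⟩ := Function.ne_iff.mp hy
  have hya : 0 < y a := (hy0 a).lt_of_ne' ha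
  -- `a` has a neighbour `b`, otherwise `q * y a ≤ (Q *ᵥ y) a = 0`.
  obtain ⟨b, hab⟩ : ∃ b, G.Adj a b := by
    by_contra! h
    have hN : G.neighborFinset a = ∅ := by ext b; simp [h b]
    have := hqy a
    rw [signlessLap_mulVec_apply, hN, sum_empty] at this
    nlinarith
  obtain ⟨d, -, hd⟩ := exists_max_image univ (fun d : G.Dart => y d.fst + y d.snd)
    ⟨⟨(a, b), hab⟩, mem_univ _⟩
  obtain ⟨⟨u, v⟩, huv⟩ := d
  simp only [mem_univ, forall_const] at hd
  set M := y u + y v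
  have hM : 0 < M := by
    have hab' : y a + y b ≤ M := hd ⟨(a, b), hab⟩
    have hyb : 0 ≤ y b := hy0 b
    linarith
  have hrow : ∀ s : V, (∀ t, G.Adj s t → y s + y t ≤ M) →
      (signlessLap G *ᵥ y) s ≤ G.degree s * M := fun s hs => by
    rw [signlessLap_mulVec_apply, ← card_neighborFinset_eq_degree, ← nsmul_eq_mul, ← sum_const]
    exact sum_le_sum fun t ht => hs t ((mem_neighborFinset G s t).mp ht)
  refine ⟨u, v, huv, le_of_mul_le_mul_right ?_ hM⟩
  calc q * M = q * y u + q * y v := mul_add _ _ _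
    _ ≤ G.degree u * M + G.degree v * M :=
        add_le_add ((hqy u).trans (hrow u fun t ht => hd ⟨(u, t), ht⟩))
          ((hqy v).trans (hrow v fun t ht => hd ⟨(v, t), ht⟩))
    _ = (G.degree u + G.degree v) * M := (add_mul _ _ _).symm

theorem degree_add_degree_le_card_inter_add_card (u v : V) :
    G.degree u + G.degree v ≤ (G.neighborFinset u ∩ G.neighborFinset v).card + Fintype.card V := by
  rw [← card_neighborFinset_eq_degree, ← card_neighborFinset_eq_degree,
    ← card_inter_add_card_union]
  exact Nat.add_le_add_left (card_le_univ _) _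

end SignlessLaplacian

theorem stmt0 (G : SimpleGraph V) [Fintype V] [DecidableEq V] [DecidableRel G.Adj] :
    qIndex G ≤ (Fintype.card V : ℝ) ∨
      ∃ u v : V, G.Adj u v ∧
        qIndex G - (Fintype.card V : ℝ)
          ≤ ((G.neighborFinset u ∩ G.neighborFinset v).card : ℝ) := by
  rcases le_or_gt (qIndex G) 0 with hq | hq
  · exact Or.inl (hq.trans (Nat.cast_nonneg _))
  have : Nonempty V := by
    by_contra h
    rw [not_nonempty_iff] at h
    simp [qIndex, Real.iSup_of_isEmpty] at hq
  obtain ⟨y, hy0, hy, hqy⟩ := exists_nonneg_qIndex_smul_le_mulVec G hq.le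
  obtain ⟨u, v, huv, hdeg⟩ := exists_adj_le_degree_add_degree G hq hy0 hy hqy
  have hcard : (G.degree u + G.degree v : ℝ)
      ≤ (G.neighborFinset u ∩ G.neighborFinset v).card + Fintype.card V := by
    exact_mod_cast degree_add_degree_le_card_inter_add_card G u v
  exact Or.inr ⟨u, v, huv, by linarith⟩
end

section
/- If G is a triangle-free graph of order n, then the signless Laplacian spectral radius satisfies q(G) ≤ n. -/
open Matrix SimpleGraph Finset BigOperators

variable {V : Type*}

/-!
For an edge `uv` of a triangle-free graph the neighbourhoods of `u` and `v` are disjoint, so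
`d u + d v ≤ n`. Since `xᵀ Q x = ½ ∑_{u ∼ v} (x u + x v)²`, the weighted Cauchy–Schwarz inequality
`(x u + x v)² ≤ (d u + d v) (x u² / d u + x v² / d v) ≤ n (x u² / d u + x v² / d v)`,
summed over ordered adjacent pairs, gives `xᵀ Q x ≤ n ‖x‖²`; hence every eigenvalue of `Q` is at
most `n`.
-/

theorem add_sq_le_mul_div_add_div {R : Type*} [Field R] [LinearOrder R] [IsStrictOrderedRing R]
    {a b : R} (ha : 0 < a) (hb : 0 < b) (x y : R) :
    (x + y) ^ 2 ≤ (a + b) * (x ^ 2 / a + y ^ 2 / b) := by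
  rw [div_add_div _ _ ha.ne' hb.ne', mul_div_assoc', le_div_iff₀ (by positivity)]
  nlinarith [sq_nonneg (a * y - b * x)]

theorem Matrix.IsHermitian.eigenvalues_le_of_dotProduct_mulVec_le {n : Type*} [Fintype n]
    [DecidableEq n] {A : Matrix n n ℝ} (hA : A.IsHermitian) {c : ℝ}
    (hc : ∀ x, x ⬝ᵥ A *ᵥ x ≤ c * (x ⬝ᵥ x)) (i : n) : hA.eigenvalues i ≤ c := by
  set v := ⇑(hA.eigenvectorBasis i)
  have hv : 0 < v ⬝ᵥ v := by
    simpa using dotProduct_star_self_pos_iff.2 <|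
      (WithLp.ofLp_eq_zero 2).ne.2 (hA.eigenvectorBasis.orthonormal.ne_zero i)
  have hquad := hc v
  rw [hA.mulVec_eigenvectorBasis, dotProduct_smul, smul_eq_mul] at hquad
  exact le_of_mul_le_mul_right hquad hv

namespace SimpleGraph

variable [Fintype V] {G : SimpleGraph V} [DecidableRel G.Adj]

theorem sum_sum_adj_div_degree_le {f : V → ℝ} (hf : 0 ≤ f) :
    ∑ u, ∑ v, (if G.Adj u v then f u / G.degree u else 0) ≤ ∑ u, f u := by
  gcongr with u
  rw [← sum_filter, ← neighborFinset_eq_filter, sum_const, card_neighborFinset_eq_degree,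
    nsmul_eq_mul]
  rcases (G.degree u).eq_zero_or_pos with h0 | hpos
  · simpa [h0] using hf u
  · rw [mul_div_cancel₀ _ (by positivity)]

variable [DecidableEq V]

theorem CliqueFree.degree_add_degree_le_card (hG : G.CliqueFree 3) {u v : V} (huv : G.Adj u v) :
    G.degree u + G.degree v ≤ Fintype.card V := by
  have hdisj : Disjoint (G.neighborFinset u) (G.neighborFinset v) :=
    Finset.disjoint_left.2 fun w hwu hwv ↦ hG {u, v, w} <|
      is3Clique_triple_iff.2 ⟨huv, (mem_neighborFinset ..).1 hwu, (mem_neighborFinset ..).1 hwv⟩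
  rw [← card_neighborFinset_eq_degree, ← card_neighborFinset_eq_degree,
    ← Finset.card_union_of_disjoint hdisj]
  exact Finset.card_le_univ _

theorem CliqueFree.sq_add_le_card_mul (hG : G.CliqueFree 3) {u v : V} (huv : G.Adj u v)
    (x : V → ℝ) :
    (x u + x v) ^ 2 ≤ Fintype.card V * (x u ^ 2 / G.degree u + x v ^ 2 / G.degree v) := by
  have hu : (0 : ℝ) < G.degree u :=
    Nat.cast_pos.2 ((G.degree_pos_iff_exists_adj u).2 ⟨v, huv⟩)
  have hv : (0 : ℝ) < G.degree v :=
    Nat.cast_pos.2 ((G.degree_pos_iff_exists_adj v).2 ⟨u, huv.symm⟩)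
  calc (x u + x v) ^ 2
      ≤ (G.degree u + G.degree v) * (x u ^ 2 / G.degree u + x v ^ 2 / G.degree v) :=
        add_sq_le_mul_div_add_div hu hv _ _
    _ ≤ Fintype.card V * (x u ^ 2 / G.degree u + x v ^ 2 / G.degree v) := by
        gcongr
        exact_mod_cast hG.degree_add_degree_le_card huv

theorem signlessLap_eq : signlessLap G = G.degMatrix ℝ + G.adjMatrix ℝ := rfl

theorem dotProduct_signlessLap_mulVec (x : V → ℝ) :
    x ⬝ᵥ signlessLap G *ᵥ x = (∑ i, ∑ j, if G.Adj i j then (x i + x j) ^ 2 else 0) / 2 := by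
  simp_rw [signlessLap_eq, add_mulVec, dotProduct_add, dotProduct_mulVec_degMatrix,
    dotProduct_mulVec_adjMatrix, ← sum_add_distrib, degree_eq_sum_if_adj, sum_mul, ite_mul,
    one_mul, zero_mul, ← sum_add_distrib, ite_add_ite, add_zero]
  rw [← add_self_div_two (∑ i : V, ∑ j : V, _)]
  conv_lhs => enter [1, 2, 2, i, 2, j]; rw [if_congr (adj_comm G i j) rfl rfl]
  conv_lhs => enter [1, 2]; rw [Finset.sum_comm]
  simp_rw [← sum_add_distrib, ite_add_ite]
  congr 2 with i
  congr 2 with j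
  ring_nf

theorem CliqueFree.dotProduct_signlessLap_mulVec_le (hG : G.CliqueFree 3) (x : V → ℝ) :
    x ⬝ᵥ signlessLap G *ᵥ x ≤ Fintype.card V * (x ⬝ᵥ x) := by
  set n : ℝ := (Fintype.card V : ℝ)
  have hsymm : (∑ u, ∑ v, if G.Adj u v then x v ^ 2 / G.degree v else 0) =
      ∑ u, ∑ v, if G.Adj u v then x u ^ 2 / G.degree u else 0 := by
    rw [sum_comm]
    simp_rw [adj_comm]
  have hx : x ⬝ᵥ x = ∑ u, x u ^ 2 := by simp [dotProduct, sq]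
  calc x ⬝ᵥ signlessLap G *ᵥ x
      = (∑ u, ∑ v, if G.Adj u v then (x u + x v) ^ 2 else 0) / 2 :=
        dotProduct_signlessLap_mulVec x
    _ ≤ (∑ u, ∑ v, ((if G.Adj u v then n * (x u ^ 2 / G.degree u) else 0) +
          if G.Adj u v then n * (x v ^ 2 / G.degree v) else 0)) / 2 := by
        gcongr with u _ v
        split_ifs with huv
        · rw [← mul_add]; exact hG.sq_add_le_card_mul huv x
        · simp
    _ = n * ∑ u, ∑ v, if G.Adj u v then x u ^ 2 / G.degree u else 0 := by
        simp_rw [sum_add_distrib, ← mul_ite_zero, ← mul_sum, hsymm]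
        ring
    _ ≤ n * (x ⬝ᵥ x) := by
        rw [hx]
        exact mul_le_mul_of_nonneg_left
          (sum_sum_adj_div_degree_le fun u ↦ sq_nonneg (x u)) (Nat.cast_nonneg _)

end SimpleGraph

theorem stmt1 (G : SimpleGraph V) [Fintype V] [DecidableEq V] [DecidableRel G.Adj]
    (h : G.CliqueFree 3) : qIndex G ≤ (Fintype.card V : ℝ) :=
  Real.iSup_le ((signlessLap_isHermitian G).eigenvalues_le_of_dotProduct_mulVec_le
    h.dotProduct_signlessLap_mulVec_le) (Nat.cast_nonneg _)
end
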